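/- arXiv:0905.3290 — 2 statements merged into one kernel-verified Lean document; each statement's English description precedes it below -/
import Mathlib

section
/- Every closed subgroup of the topological group ℝ × ℤ is exactly one of the following: (I) ℤ·(1/α, 0) for a unique α ∈ [0, ∞] (with the conventions ℤ·(1/0,0) = {0} and α = ∞ giving ℝ × {0}); (II) ℤ·(γ, n) for unique γ ∈ ℝ and n ∈ ℕ \ {0}; (III) ℤ·(1/α, 0) + ℤ·(β/α, n) for unique α ∈ (0,∞), β mod ℤ, and n ∈ ℕ \ {0}; (IV) ℝ × nℤ for a unique n ∈ ℕ \ {0}. -/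
open TopologicalSpace Filter Topology

/-- The space of closed subsets of `X`. -/
def ChabautySpace (X : Type*) [TopologicalSpace X] := {F : Set X // IsClosed F}

/-- The underlying closed set. -/
def ChabautySpace.toSet {X : Type*} [TopologicalSpace X] (F : ChabautySpace X) : Set X := F.1

/-- The Chabauty (Fell) topology on the space of closed subsets, generated by the sets
`O_K = {F | F ∩ K = ∅}` for `K` compact and `O'_U = {F | F ∩ U ≠ ∅}` for `U` open. -/
instance (X : Type*) [TopologicalSpace X] : TopologicalSpace (ChabautySpace X) :=
  TopologicalSpace.generateFrom
    ({S | ∃ K : Set X, IsCompact K ∧ S = {F : ChabautySpace X | F.toSet ∩ K = ∅}} ∪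
     {S | ∃ U : Set X, IsOpen U ∧ S = {F : ChabautySpace X | (F.toSet ∩ U).Nonempty}})

/-- The space of closed subgroups of an additive topological group `G`. -/
def ClosedAddSubgroups (G : Type*) [AddGroup G] [TopologicalSpace G] :=
  {H : AddSubgroup G // IsClosed (H : Set G)}

/-- The underlying subgroup. -/
def ClosedAddSubgroups.toAddSubgroup {G : Type*} [AddGroup G] [TopologicalSpace G]
    (H : ClosedAddSubgroups G) : AddSubgroup G := H.1

/-- The Chabauty topology on the space of closed subgroups, induced by the
Chabauty topology on closed subsets. -/
instance (G : Type*) [AddGroup G] [TopologicalSpace G] :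
    TopologicalSpace (ClosedAddSubgroups G) :=
  TopologicalSpace.induced
    (fun H : ClosedAddSubgroups G => (⟨(H.toAddSubgroup : Set G), H.2⟩ : ChabautySpace G))
    (inferInstance : TopologicalSpace (ChabautySpace G))

open scoped ENNReal

/-- Family (I): the closed subgroups `ℤ·(1/α, 0)` contained in `ℝ × {0}`, parametrized by
`α ∈ [0,∞]`; conventions: `α = 0` gives the trivial subgroup, `α = ∞` gives `ℝ × {0}`. -/
noncomputable def GI (α : ℝ≥0∞) : AddSubgroup (ℝ × ℤ) :=
  if α = ⊤ then (⊤ : AddSubgroup ℝ).prod ⊥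
  else AddSubgroup.zmultiples (((α.toReal)⁻¹ : ℝ), (0 : ℤ))

/-- Family (II): the infinite cyclic subgroups `ℤ·(γ, n)`. -/
def GII (γ : ℝ) (n : ℕ) : AddSubgroup (ℝ × ℤ) := AddSubgroup.zmultiples (γ, (n : ℤ))

/-- Family (III): the subgroups `ℤ·(1/α, 0) + ℤ·(β/α, n)`. -/
noncomputable def GIII (α β : ℝ) (n : ℕ) : AddSubgroup (ℝ × ℤ) :=
  AddSubgroup.zmultiples ((α⁻¹ : ℝ), (0 : ℤ)) ⊔ AddSubgroup.zmultiples ((β / α : ℝ), (n : ℤ))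

/-- Family (IV): the subgroups `ℝ × nℤ`. -/
def GIV (n : ℕ) : AddSubgroup (ℝ × ℤ) :=
  (⊤ : AddSubgroup ℝ).prod (AddSubgroup.zmultiples (n : ℤ))

/-!
A subgroup `H ≤ ℝ × ℤ` with `A = {x | (x, 0) ∈ H}` and `snd(H) = nℤ` equals `A × {0} + ℤ·(g, n)`
for any `(g, n) ∈ H`. If `H` is closed, so is `A`, hence `A = ℝ` or `A = ℤ·a` with `a ≥ 0`
(a subgroup of `ℝ` is dense or cyclic); the four families are what this gives for `n = 0`, and
for `n ≠ 0` with `A = 0`, `A = ℤ·a` (`a > 0`), `A = ℝ`. Conversely `A` and `n` can be read off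
each family, which separates the families and fixes `α` and `n`, and `g` is unique modulo `A`.
-/

open AddSubgroup

section LinearOrderedAddCommGroup

variable {G : Type*} [AddCommGroup G] [LinearOrder G] [IsOrderedAddMonoid G]

theorem AddSubgroup.eq_of_zmultiples_eq_of_nonneg {a b : G} (ha : 0 ≤ a) (hb : 0 ≤ b)
    (h : zmultiples a = zmultiples b) : a = b := by
  rcases ha.eq_or_lt with rfl | ha
  · exact (zmultiples_eq_bot.mp (h ▸ zmultiples_zero_eq_bot)).symm
  · rcases (zmultiples_eq_zmultiples_iff (not_isOfFinAddOrder_of_isAddTorsionFree ha.ne')).mp h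
      with hab | hab
    · exact hab
    · exact absurd (hab ▸ hb) (not_le.mpr (neg_neg_of_pos ha))

variable [TopologicalSpace G] [OrderTopology G] [Archimedean G]

theorem AddSubgroup.eq_top_or_exists_eq_zmultiples_of_isClosed (S : AddSubgroup G)
    (hS : IsClosed (S : Set G)) : S = ⊤ ∨ ∃ a, 0 ≤ a ∧ S = zmultiples a := by
  rcases S.dense_or_cyclic with hd | ⟨a, rfl⟩
  · exact .inl (coe_eq_univ.mp (hS.closure_eq ▸ hd.closure_eq))
  · rw [← zmultiples_eq_closure]
    rcases le_total 0 a with ha | ha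
    · exact .inr ⟨a, ha, rfl⟩
    · exact .inr ⟨-a, neg_nonneg.mpr ha, by rw [zmultiples_neg]⟩

end LinearOrderedAddCommGroup

theorem Real.zmultiples_ne_top (a : ℝ) : zmultiples a ≠ ⊤ := fun h ↦
  not_isAddCyclic_of_denselyOrdered ℝ (isAddCyclic_iff_exists_zmultiples_eq_top.mpr ⟨a, h⟩)

namespace AddSubgroup

variable {G : Type*} [AddCommGroup G]

def inlSupZMultiples (B : AddSubgroup G) (g : G) (n : ℤ) : AddSubgroup (G × ℤ) :=
  B.map (AddMonoidHom.inl G ℤ) ⊔ zmultiples (g, n)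

theorem mem_inlSupZMultiples {B : AddSubgroup G} {g : G} {n : ℤ} {p : G × ℤ} :
    p ∈ inlSupZMultiples B g n ↔ ∃ k : ℤ, p.2 = k * n ∧ p.1 - k • g ∈ B := by
  simp only [inlSupZMultiples, mem_sup, mem_map, mem_zmultiples_iff]
  constructor
  · rintro ⟨_, ⟨b, hb, rfl⟩, _, ⟨k, rfl⟩, rfl⟩
    exact ⟨k, by simp, by simpa using hb⟩
  · rintro ⟨k, h2, h1⟩
    exact ⟨_, ⟨_, h1, rfl⟩, _, ⟨k, rfl⟩, Prod.ext (by simp) (by simp [h2])⟩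

theorem comap_inl_inlSupZMultiples (B : AddSubgroup G) (g : G) {n : ℤ} (hn : n ≠ 0) :
    (inlSupZMultiples B g n).comap (AddMonoidHom.inl G ℤ) = B := by
  ext x
  simp only [mem_comap, AddMonoidHom.inl_apply, mem_inlSupZMultiples]
  constructor
  · rintro ⟨k, hk, hx⟩
    obtain rfl : k = 0 := by simpa [hn] using hk.symm
    simpa using hx
  · exact fun hx ↦ ⟨0, by simp, by simpa using hx⟩

theorem map_snd_inlSupZMultiples (B : AddSubgroup G) (g : G) (n : ℤ) :
    (inlSupZMultiples B g n).map (AddMonoidHom.snd G ℤ) = zmultiples n := by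
  ext m
  simp only [mem_map, AddMonoidHom.coe_snd, mem_inlSupZMultiples, Int.mem_zmultiples_iff]
  constructor
  · rintro ⟨p, ⟨k, hk, -⟩, rfl⟩
    exact ⟨k, by rw [hk, mul_comm]⟩
  · rintro ⟨k, rfl⟩
    exact ⟨(k • g, n * k), ⟨k, mul_comm _ _, by simp⟩, rfl⟩

theorem inlSupZMultiples_zero_zero (B : AddSubgroup G) :
    inlSupZMultiples B 0 0 = B.map (AddMonoidHom.inl G ℤ) := by
  rw [inlSupZMultiples, Prod.mk_zero_zero, zmultiples_zero_eq_bot, sup_bot_eq]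

theorem sub_mem_of_mem_inlSupZMultiples {B : AddSubgroup G} {g g' : G} {n : ℤ} (hn : n ≠ 0)
    (h : (g', n) ∈ inlSupZMultiples B g n) : g' - g ∈ B := by
  obtain ⟨k, hk, hg'⟩ := mem_inlSupZMultiples.mp h
  obtain rfl : k = 1 := by
    have : (k - 1) * n = 0 := by linarith
    simpa [hn, sub_eq_zero] using this
  simpa using hg'

theorem eq_inlSupZMultiples (H : AddSubgroup (G × ℤ)) {g : G} {n : ℤ} (hg : (g, n) ∈ H)
    (hn : H.map (AddMonoidHom.snd G ℤ) ≤ zmultiples n) :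
    H = inlSupZMultiples (H.comap (AddMonoidHom.inl G ℤ)) g n := by
  ext p
  rw [mem_inlSupZMultiples]
  have hdecomp {k : ℤ} (hk : p.2 = k * n) : p = (p.1 - k • g, 0) + k • (g, n) :=
    Prod.ext (by simp) (by simp [hk])
  constructor
  · intro hp
    obtain ⟨k, hk⟩ := Int.mem_zmultiples_iff.mp (hn ⟨p, hp, rfl⟩)
    have hk : p.2 = k * n := by simp [← hk, mul_comm]
    rw [hdecomp hk, H.add_mem_cancel_right (H.zsmul_mem hg k)] at hp
    exact ⟨k, hk, hp⟩
  · rintro ⟨k, hk, hp⟩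
    rw [hdecomp hk]
    exact H.add_mem hp (H.zsmul_mem hg k)

end AddSubgroup

/-- `α = 0` gives `⊥` through the junk value `0⁻¹ = 0`. -/
noncomputable def invZMultiples (α : ℝ≥0∞) : AddSubgroup ℝ :=
  if α = ⊤ then ⊤ else zmultiples α.toReal⁻¹

theorem invZMultiples_injective : Function.Injective invZMultiples := by
  intro α α' h
  unfold invZMultiples at h
  split_ifs at h with hα hα' hα'
  · exact hα.trans hα'.symm
  · exact absurd h.symm (Real.zmultiples_ne_top _)
  · exact absurd h (Real.zmultiples_ne_top _)
  · have := inv_inj.mp (eq_of_zmultiples_eq_of_nonneg (by positivity) (by positivity) h)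
    exact (ENNReal.toReal_eq_toReal_iff' hα hα').mp this

theorem exists_invZMultiples_eq_of_isClosed (A : AddSubgroup ℝ) (hA : IsClosed (A : Set ℝ)) :
    ∃ α, invZMultiples α = A := by
  rcases A.eq_top_or_exists_eq_zmultiples_of_isClosed hA with rfl | ⟨a, ha, rfl⟩
  · exact ⟨⊤, if_pos rfl⟩
  · refine ⟨ENNReal.ofReal a⁻¹, ?_⟩
    rw [invZMultiples, if_neg ENNReal.ofReal_ne_top, ENNReal.toReal_ofReal (inv_nonneg.mpr ha),
      inv_inv]

theorem GI_eq_map_inl (α : ℝ≥0∞) : GI α = (invZMultiples α).map (AddMonoidHom.inl ℝ ℤ) := by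
  unfold GI invZMultiples
  split_ifs
  · ext p
    simp [AddSubgroup.mem_prod, Prod.ext_iff, eq_comm]
  · exact (AddMonoidHom.map_zmultiples (AddMonoidHom.inl ℝ ℤ) _).symm

theorem GII_eq_inlSupZMultiples (γ : ℝ) (n : ℕ) : GII γ n = inlSupZMultiples ⊥ γ n := by
  rw [GII, inlSupZMultiples, AddSubgroup.map_bot, bot_sup_eq]

theorem GIII_eq_inlSupZMultiples (α β : ℝ) (n : ℕ) :
    GIII α β n = inlSupZMultiples (zmultiples α⁻¹) (β / α) n := by
  rw [GIII, inlSupZMultiples, AddMonoidHom.map_zmultiples]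
  rfl

theorem GIV_eq_inlSupZMultiples (g : ℝ) (n : ℕ) : GIV n = inlSupZMultiples ⊤ g n := by
  ext p
  simp [GIV, mem_inlSupZMultiples, mem_prod, Int.mem_zmultiples_iff, dvd_def, mul_comm]

theorem comap_inl_GI (α : ℝ≥0∞) : (GI α).comap (AddMonoidHom.inl ℝ ℤ) = invZMultiples α := by
  rw [GI_eq_map_inl]
  exact comap_map_eq_self_of_injective (fun _ _ h ↦ congrArg Prod.fst h) _

theorem comap_inl_GII (γ : ℝ) {n : ℕ} (hn : 0 < n) :
    (GII γ n).comap (AddMonoidHom.inl ℝ ℤ) = ⊥ := by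
  rw [GII_eq_inlSupZMultiples, comap_inl_inlSupZMultiples _ _ (by positivity)]

theorem comap_inl_GIII (α β : ℝ) {n : ℕ} (hn : 0 < n) :
    (GIII α β n).comap (AddMonoidHom.inl ℝ ℤ) = zmultiples α⁻¹ := by
  rw [GIII_eq_inlSupZMultiples, comap_inl_inlSupZMultiples _ _ (by positivity)]

theorem comap_inl_GIV {n : ℕ} (hn : 0 < n) : (GIV n).comap (AddMonoidHom.inl ℝ ℤ) = ⊤ := by
  rw [GIV_eq_inlSupZMultiples 0, comap_inl_inlSupZMultiples _ _ (by positivity)]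

theorem map_snd_GI (α : ℝ≥0∞) : (GI α).map (AddMonoidHom.snd ℝ ℤ) = ⊥ := by
  rw [GI_eq_map_inl, ← inlSupZMultiples_zero_zero, map_snd_inlSupZMultiples,
    zmultiples_zero_eq_bot]

theorem map_snd_GII (γ : ℝ) (n : ℕ) :
    (GII γ n).map (AddMonoidHom.snd ℝ ℤ) = zmultiples (n : ℤ) := by
  rw [GII_eq_inlSupZMultiples, map_snd_inlSupZMultiples]

theorem map_snd_GIII (α β : ℝ) (n : ℕ) :
    (GIII α β n).map (AddMonoidHom.snd ℝ ℤ) = zmultiples (n : ℤ) := by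
  rw [GIII_eq_inlSupZMultiples, map_snd_inlSupZMultiples]

theorem map_snd_GIV (n : ℕ) : (GIV n).map (AddMonoidHom.snd ℝ ℤ) = zmultiples (n : ℤ) := by
  rw [GIV_eq_inlSupZMultiples 0, map_snd_inlSupZMultiples]

theorem Int.zmultiples_natCast_ne_bot {n : ℕ} (hn : 0 < n) : zmultiples (n : ℤ) ≠ ⊥ := by
  simpa [zmultiples_eq_bot] using hn.ne'

theorem Int.eq_of_zmultiples_natCast_eq {n n' : ℕ} (h : zmultiples (n : ℤ) = zmultiples (n' : ℤ)) :
    n = n' := by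
  exact_mod_cast eq_of_zmultiples_eq_of_nonneg (by positivity) (by positivity) h

theorem GI_injective : Function.Injective GI := fun α α' h ↦
  invZMultiples_injective (by rw [← comap_inl_GI, h, comap_inl_GI])

theorem eq_of_GII_eq {γ γ' : ℝ} {n n' : ℕ} (hn : 0 < n) (h : GII γ n = GII γ' n') :
    γ = γ' ∧ n = n' := by
  obtain rfl : n = n' := Int.eq_of_zmultiples_natCast_eq (by rw [← map_snd_GII γ, h, map_snd_GII])
  have : (γ', (n : ℤ)) ∈ inlSupZMultiples ⊥ γ n := by
    rw [← GII_eq_inlSupZMultiples, h]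
    exact mem_zmultiples _
  have := mem_bot.mp (sub_mem_of_mem_inlSupZMultiples (by positivity) this)
  exact ⟨(sub_eq_zero.mp this).symm, rfl⟩

theorem eq_of_GIII_eq {α α' β β' : ℝ} {n n' : ℕ} (hα : 0 < α) (hα' : 0 < α') (hn : 0 < n)
    (hn' : 0 < n') (h : GIII α β n = GIII α' β' n') : α = α' ∧ n = n' ∧ ∃ p : ℤ, β' = β + p := by
  obtain rfl : α = α' := inv_inj.mp <| eq_of_zmultiples_eq_of_nonneg (by positivity)
    (by positivity) (by rw [← comap_inl_GIII α β hn, h, comap_inl_GIII α' β' hn'])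
  obtain rfl : n = n' :=
    Int.eq_of_zmultiples_natCast_eq (by rw [← map_snd_GIII α β, h, map_snd_GIII])
  have : (β' / α, (n : ℤ)) ∈ inlSupZMultiples (zmultiples α⁻¹) (β / α) n := by
    rw [← GIII_eq_inlSupZMultiples, h, GIII_eq_inlSupZMultiples]
    exact mem_sup_right (mem_zmultiples _)
  obtain ⟨p, hp⟩ := mem_zmultiples_iff.mp (sub_mem_of_mem_inlSupZMultiples (by positivity) this)
  refine ⟨rfl, rfl, p, ?_⟩
  rw [zsmul_eq_mul, ← sub_div, ← div_eq_mul_inv, div_left_inj' hα.ne'] at hp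
  linarith

theorem eq_of_GIV_eq {n n' : ℕ} (h : GIV n = GIV n') : n = n' :=
  Int.eq_of_zmultiples_natCast_eq (by rw [← map_snd_GIV, h, map_snd_GIV])

theorem GI_ne_GII (α : ℝ≥0∞) (γ : ℝ) {n : ℕ} (hn : 0 < n) : GI α ≠ GII γ n := fun h ↦
  Int.zmultiples_natCast_ne_bot hn (by rw [← map_snd_GII γ, ← h, map_snd_GI])

theorem GI_ne_GIII (α : ℝ≥0∞) (α' β : ℝ) {n : ℕ} (hn : 0 < n) : GI α ≠ GIII α' β n := fun h ↦
  Int.zmultiples_natCast_ne_bot hn (by rw [← map_snd_GIII α' β, ← h, map_snd_GI])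

theorem GI_ne_GIV (α : ℝ≥0∞) {n : ℕ} (hn : 0 < n) : GI α ≠ GIV n := fun h ↦
  Int.zmultiples_natCast_ne_bot hn (by rw [← map_snd_GIV, ← h, map_snd_GI])

theorem GII_ne_GIII (γ : ℝ) {n : ℕ} (α β : ℝ) {m : ℕ} (hn : 0 < n) (hα : 0 < α)
    (hm : 0 < m) : GII γ n ≠ GIII α β m := fun h ↦
  (inv_pos.mpr hα).ne' <| zmultiples_eq_bot.mp <| by
    rw [← comap_inl_GIII α β hm, ← h, comap_inl_GII γ hn]

theorem GII_ne_GIV (γ : ℝ) {n m : ℕ} (hn : 0 < n) (hm : 0 < m) : GII γ n ≠ GIV m := fun h ↦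
  bot_ne_top (by rw [← comap_inl_GII γ hn, h, comap_inl_GIV hm])

theorem GIII_ne_GIV (α β : ℝ) {n m : ℕ} (hn : 0 < n) (hm : 0 < m) : GIII α β n ≠ GIV m :=
  fun h ↦ Real.zmultiples_ne_top α⁻¹ (by rw [← comap_inl_GIII α β hn, h, comap_inl_GIV hm])

theorem exists_eq_GI_or_GII_or_GIII_or_GIV (H : AddSubgroup (ℝ × ℤ))
    (hH : IsClosed (H : Set (ℝ × ℤ))) :
    (∃ α : ℝ≥0∞, H = GI α) ∨
      (∃ (γ : ℝ) (n : ℕ), 0 < n ∧ H = GII γ n) ∨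
      (∃ (α β : ℝ) (n : ℕ), 0 < α ∧ 0 < n ∧ H = GIII α β n) ∨
      (∃ n : ℕ, 0 < n ∧ H = GIV n) := by
  have hA : IsClosed (H.comap (AddMonoidHom.inl ℝ ℤ) : Set ℝ) :=
    hH.preimage (by fun_prop : Continuous fun x : ℝ ↦ (x, (0 : ℤ)))
  obtain ⟨n, hn⟩ : ∃ n : ℕ, H.map (AddMonoidHom.snd ℝ ℤ) = zmultiples (n : ℤ) := by
    obtain ⟨m, hm⟩ := Int.subgroup_cyclic (H.map (AddMonoidHom.snd ℝ ℤ))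
    exact ⟨m.natAbs, by rw [hm, Int.zmultiples_natAbs, zmultiples_eq_closure]⟩
  rcases n.eq_zero_or_pos with rfl | hn0
  · obtain ⟨α, hα⟩ := exists_invZMultiples_eq_of_isClosed _ hA
    refine .inl ⟨α, ?_⟩
    rw [eq_inlSupZMultiples H (g := 0) (n := 0) H.zero_mem (by simpa using hn.le),
      inlSupZMultiples_zero_zero, GI_eq_map_inl, hα]
  obtain ⟨⟨g, _⟩, hg, rfl⟩ : (n : ℤ) ∈ H.map (AddMonoidHom.snd ℝ ℤ) := hn ▸ mem_zmultiples _
  rw [eq_inlSupZMultiples H hg hn.le]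
  rcases (H.comap _).eq_top_or_exists_eq_zmultiples_of_isClosed hA with hAtop | ⟨a, ha, hAa⟩
  · exact .inr <| .inr <| .inr ⟨n, hn0, by rw [hAtop, GIV_eq_inlSupZMultiples g]⟩
  obtain rfl | ha := ha.eq_or_lt
  · exact .inr <| .inl ⟨g, n, hn0, by rw [hAa, zmultiples_zero_eq_bot, GII_eq_inlSupZMultiples]⟩
  refine .inr <| .inr <| .inl ⟨a⁻¹, g * a⁻¹, n, inv_pos.mpr ha, hn0, ?_⟩
  rw [hAa, GIII_eq_inlSupZMultiples, inv_inv, mul_div_cancel_right₀ _ (inv_ne_zero ha.ne')]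

theorem stmt_7 :
    -- existence: every closed subgroup of `ℝ × ℤ` is of one of the four forms
    (∀ H : AddSubgroup (ℝ × ℤ), IsClosed (H : Set (ℝ × ℤ)) →
      (∃ α : ℝ≥0∞, H = GI α) ∨
      (∃ (γ : ℝ) (n : ℕ), 0 < n ∧ H = GII γ n) ∨
      (∃ (α β : ℝ) (n : ℕ), 0 < α ∧ 0 < n ∧ H = GIII α β n) ∨
      (∃ n : ℕ, 0 < n ∧ H = GIV n)) ∧
    -- uniqueness of parameters within each family
    (∀ α α' : ℝ≥0∞, GI α = GI α' → α = α') ∧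
    (∀ (γ γ' : ℝ) (n n' : ℕ), 0 < n → 0 < n' → GII γ n = GII γ' n' → γ = γ' ∧ n = n') ∧
    (∀ (α α' β β' : ℝ) (n n' : ℕ), 0 < α → 0 < α' → 0 < n → 0 < n' →
      GIII α β n = GIII α' β' n' → α = α' ∧ n = n' ∧ ∃ p : ℤ, β' = β + p) ∧
    (∀ n n' : ℕ, 0 < n → 0 < n' → GIV n = GIV n' → n = n') ∧
    -- the four families are pairwise disjoint
    (∀ (α : ℝ≥0∞) (γ : ℝ) (n : ℕ), 0 < n → GI α ≠ GII γ n) ∧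
    (∀ (α : ℝ≥0∞) (α' β : ℝ) (n : ℕ), 0 < α' → 0 < n → GI α ≠ GIII α' β n) ∧
    (∀ (α : ℝ≥0∞) (n : ℕ), 0 < n → GI α ≠ GIV n) ∧
    (∀ (γ : ℝ) (n : ℕ) (α β : ℝ) (m : ℕ), 0 < n → 0 < α → 0 < m → GII γ n ≠ GIII α β m) ∧
    (∀ (γ : ℝ) (n m : ℕ), 0 < n → 0 < m → GII γ n ≠ GIV m) ∧
    (∀ (α β : ℝ) (n m : ℕ), 0 < α → 0 < n → 0 < m → GIII α β n ≠ GIV m) :=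
  ⟨exists_eq_GI_or_GII_or_GIII_or_GIV,
    fun _ _ ↦ (GI_injective ·),
    fun _ _ _ _ hn _ ↦ eq_of_GII_eq hn,
    fun _ _ _ _ _ _ ↦ eq_of_GIII_eq,
    fun _ _ _ _ ↦ eq_of_GIV_eq,
    fun α γ _ ↦ GI_ne_GII α γ,
    fun α α' β _ _ ↦ GI_ne_GIII α α' β,
    GI_ne_GIV,
    fun γ _ α β _ ↦ GII_ne_GIII γ α β,
    fun γ _ _ ↦ GII_ne_GIV γ,
    fun α β _ _ _ ↦ GIII_ne_GIV α β⟩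
end

section
/- Let H be a closed subgroup of ℝ × ℤ with projection to ℤ equal to nℤ (n > 0) and with H ∩ (ℝ × {0}) = (1/α)ℤ × {0} for some α ∈ (0,∞). Then there exists β ∈ ℝ, unique modulo ℤ, such that H = ℤ·(1/α, 0) + ℤ·(β/α, n). -/
open TopologicalSpace Filter Topology

open scoped ENNReal

/-! Pick `(b, n) ∈ H`. Any `(x, j n) ∈ H` differs from `j • (b, n)` by an element of
`H ∩ (ℝ × {0}) = ℤ • (1/α, 0)`, so `H` is generated by `(1/α, 0)` and `(b, n)`, i.e. `β = α b`.
If `β'` also works, `(β'/α, n) - (b, n) ∈ H ∩ (ℝ × {0})`, so `β' - β ∈ ℤ`. -/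

namespace AddSubgroup

variable {G B : Type*} [AddCommGroup G] [AddCommGroup B] {H : AddSubgroup (G × B)}

theorem sub_mk_zero_mem {c c' : G} {m : B} (h : (c, m) ∈ H) (h' : (c', m) ∈ H) :
    (c' - c, (0 : B)) ∈ H := by
  simpa using H.sub_mem h' h

theorem eq_zmultiples_sup_zmultiples_of_map_snd {k b : G} {m : B} (hbm : (b, m) ∈ H)
    (hproj : H.map (AddMonoidHom.snd G B) = zmultiples m)
    (hker : ∀ x : G, (x, (0 : B)) ∈ H ↔ x ∈ zmultiples k) :
    H = zmultiples (k, (0 : B)) ⊔ zmultiples (b, m) := by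
  refine le_antisymm ?_ (sup_le ?_ ?_)
  · rintro ⟨x, y⟩ hxy
    obtain ⟨j, rfl⟩ : y ∈ zmultiples m := hproj ▸ ⟨(x, y), hxy, rfl⟩
    have hjb : (j • b, j • m) ∈ H := by simpa using H.zsmul_mem hbm j
    obtain ⟨i, hi⟩ := (hker _).mp (sub_mk_zero_mem hjb hxy)
    have hdecomp : (x, j • m) = i • (k, (0 : B)) + j • (b, m) := by
      ext <;> simp [hi]
    rw [hdecomp]
    exact add_mem (mem_sup_left (zsmul_mem_zmultiples _ i))
      (mem_sup_right (zsmul_mem_zmultiples _ j))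
  · exact zmultiples_le.mpr ((hker k).mpr (mem_zmultiples k))
  · exact zmultiples_le.mpr hbm

end AddSubgroup

theorem stmt_9_general (H : AddSubgroup (ℝ × ℤ))
    (n : ℕ) (α : ℝ) (hα : 0 < α)
    (hproj : AddSubgroup.map (AddMonoidHom.snd ℝ ℤ) H = AddSubgroup.zmultiples (n : ℤ))
    (hint : ∀ x : ℝ, (x, (0 : ℤ)) ∈ H ↔ x ∈ AddSubgroup.zmultiples (α⁻¹ : ℝ)) :
    ∃ β : ℝ, H = GIII α β n ∧ ∀ β' : ℝ, H = GIII α β' n → ∃ p : ℤ, β' = β + p := by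
  obtain ⟨⟨b, _⟩, hb, rfl⟩ : (n : ℤ) ∈ H.map (AddMonoidHom.snd ℝ ℤ) :=
    hproj ▸ AddSubgroup.mem_zmultiples _
  refine ⟨b * α, ?_, fun β' hβ' => ?_⟩
  · rw [GIII, mul_div_cancel_right₀ b hα.ne']
    exact AddSubgroup.eq_zmultiples_sup_zmultiples_of_map_snd hb hproj hint
  · have hβ'_mem : (β' / α, (n : ℤ)) ∈ H :=
      hβ' ▸ AddSubgroup.mem_sup_right (AddSubgroup.mem_zmultiples _)
    obtain ⟨p, hp⟩ := (hint _).mp (AddSubgroup.sub_mk_zero_mem hb hβ'_mem)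
    refine ⟨p, ?_⟩
    simp only [zsmul_eq_mul] at hp
    field_simp at hp
    linarith

theorem stmt_9 (H : AddSubgroup (ℝ × ℤ)) (hc : IsClosed (H : Set (ℝ × ℤ)))
    (n : ℕ) (hn : 0 < n) (α : ℝ) (hα : 0 < α)
    (hproj : AddSubgroup.map (AddMonoidHom.snd ℝ ℤ) H = AddSubgroup.zmultiples (n : ℤ))
    (hint : ∀ x : ℝ, (x, (0 : ℤ)) ∈ H ↔ x ∈ AddSubgroup.zmultiples (α⁻¹ : ℝ)) :
    ∃ β : ℝ, H = GIII α β n ∧ ∀ β' : ℝ, H = GIII α β' n → ∃ p : ℤ, β' = β + p :=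
  stmt_9_general H n α hα hproj hint
end
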